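/- Let M be a cofibrantly generated monoidal model category satisfying condition (♠) in which the domains and codomains of the generating (trivial) cofibrations are small with respect to the entire category, and let O be a C-colored operad in M. Then the model structure on the category of Smith O-ideals (with weak equivalences and fibrations defined entrywise in M) is cofibrantly generated, with generating cofibrations the maps O⃗□ ∘ (L₀I ∪ L₁I)_c and generating trivial cofibrations the maps O⃗□ ∘ (L₀J ∪ L₁J)_c for c ∈ C, where I and J are the generating cofibrations and generating trivial cofibrations of M, (−)_c denotes the C-colored object concentrated in color c with all other entries initial, and ∘ is the circle product of the operad O⃗□. -/

import Mathlib

/-! Common framework for formalizing "Smith Ideals of Operadic Algebras in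
Monoidal Model Categories" (White–Yau). -/

universe w v u

open CategoryTheory Category Limits MonoidalCategory Opposite

namespace SmithIdeals

variable {M : Type u} [Category.{v} M]

/-- A model structure on a category: three classes of maps (weak equivalences,
cofibrations, fibrations) satisfying the usual model category axioms
(two-out-of-three, retract closure, lifting, factorization). -/
structure ModelStructure (M : Type u) [Category.{v} M] : Type (max u (v + 1)) where
  weq : MorphismProperty M
  cof : MorphismProperty M
  fib : MorphismProperty M
  /-- two-out-of-three -/
  weq_comp : ∀ {X Y Z : M} (f : X ⟶ Y) (g : Y ⟶ Z), weq f → weq g → weq (f ≫ g)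
  weq_cancel_left : ∀ {X Y Z : M} (f : X ⟶ Y) (g : Y ⟶ Z), weq f → weq (f ≫ g) → weq g
  weq_cancel_right : ∀ {X Y Z : M} (f : X ⟶ Y) (g : Y ⟶ Z), weq g → weq (f ≫ g) → weq f
  /-- the three classes are closed under retracts (in the arrow category) -/
  weq_retract : ∀ (f g : Arrow M) (i : f ⟶ g) (r : g ⟶ f), i ≫ r = 𝟙 f → weq g.hom → weq f.hom
  cof_retract : ∀ (f g : Arrow M) (i : f ⟶ g) (r : g ⟶ f), i ≫ r = 𝟙 f → cof g.hom → cof f.hom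
  fib_retract : ∀ (f g : Arrow M) (i : f ⟶ g) (r : g ⟶ f), i ≫ r = 𝟙 f → fib g.hom → fib f.hom
  /-- lifting axioms -/
  lift_cof_trivFib : ∀ {A B X Y : M} (i : A ⟶ B) (p : X ⟶ Y),
    cof i → fib p → weq p → HasLiftingProperty i p
  lift_trivCof_fib : ∀ {A B X Y : M} (i : A ⟶ B) (p : X ⟶ Y),
    cof i → weq i → fib p → HasLiftingProperty i p
  /-- factorization axioms -/
  fact_cof_trivFib : ∀ {X Y : M} (f : X ⟶ Y),
    ∃ (Z : M) (g : X ⟶ Z) (h : Z ⟶ Y), cof g ∧ fib h ∧ weq h ∧ g ≫ h = f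
  fact_trivCof_fib : ∀ {X Y : M} (f : X ⟶ Y),
    ∃ (Z : M) (g : X ⟶ Z) (h : Z ⟶ Y), cof g ∧ weq g ∧ fib h ∧ g ≫ h = f

namespace ModelStructure

variable (σ : ModelStructure M)

/-- Trivial cofibrations. -/
def trivCof : MorphismProperty M := fun _ _ f => σ.cof f ∧ σ.weq f

/-- Trivial fibrations. -/
def trivFib : MorphismProperty M := fun _ _ f => σ.fib f ∧ σ.weq f

/-- An object is cofibrant. (In a model category this lifting-theoretic
formulation is equivalent to `∅ ⟶ X` being a cofibration.) -/
def Cofibrant (X : M) : Prop :=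
  ∀ {Y Z : M} (p : Y ⟶ Z), σ.trivFib p → ∀ h : X ⟶ Z, ∃ l : X ⟶ Y, l ≫ p = h

/-- An object is fibrant.  (Dually, this is equivalent to `X ⟶ *` being
a fibration.) -/
def Fibrant (X : M) : Prop :=
  ∀ {A B : M} (i : A ⟶ B), σ.trivCof i → ∀ h : A ⟶ X, ∃ e : B ⟶ X, i ≫ e = h

end ModelStructure

section Smallness

/-- The cocone over the restriction of a chain `F` to `Set.Iio j`, with apex `F.obj j`. -/
@[simps]
def chainCocone {Γ : Type v} [Preorder Γ] (F : Γ ⥤ M) (j : Γ) :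
    Cocone ((Monotone.functor (f := fun x : Set.Iio j => (x.1 : Γ))
      (fun _ _ h => h)).comp F) where
  pt := F.obj j
  ι := { app := fun x => F.map (homOfLE x.2.le)
         naturality := fun x y h => by
          dsimp [Monotone.functor]
          rw [← F.map_comp, homOfLE_comp, comp_id] }

/-- A chain indexed by an ordinal is smooth (continuous) if at each limit stage the
restriction exhibits the value as the colimit of the earlier stages. -/
def IsSmoothChain {o : Ordinal.{v}} (F : o.ToType ⥤ M) : Prop :=
  ∀ j : o.ToType, Order.IsSuccLimit j → Nonempty (IsColimit (chainCocone F j))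

/-- `K` is `κ`-small relative to the entire category: for every ordinal `o` of
cofinality at least `κ` and every smooth chain `F : o.ToType ⥤ M`, the canonical map
`colim Hom(K, F·) ⟶ Hom(K, colim F)` is bijective. -/
def IsSmallRelEntire [HasColimits M] (K : M) : Prop :=
  ∃ κ : Cardinal.{v}, κ.IsRegular ∧
    ∀ (o : Ordinal.{v}), κ ≤ (Ordinal.cof o) → ∀ (F : o.ToType ⥤ M), IsSmoothChain F →
      Function.Bijective
        (colimit.desc (F ⋙ coyoneda.obj (op K))
          ((coyoneda.obj (op K)).mapCocone (colimit.cocone F)))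

/-- A class of maps is stable under transfinite composition. -/
def StableUnderTransfiniteComposition [HasColimits M] (W : MorphismProperty M) : Prop :=
  ∀ (o : Ordinal.{v}) (F : o.ToType ⥤ M), IsSmoothChain F →
    (∀ (j k : o.ToType) (h : j ⋖ k), W (F.map (homOfLE h.le))) →
    ∀ (b : o.ToType), (∀ x, b ≤ x) → W (colimit.ι F b)

/-- A class of maps is stable under pushout (cobase change). -/
def StableUnderPushout (W : MorphismProperty M) : Prop :=
  ∀ {A B A' B' : M} {f : A ⟶ B} {s : A ⟶ A'} {f' : A' ⟶ B'} {t : B ⟶ B'},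
    IsPushout s f f' t → W f → W f'

end Smallness

section CofibrantGeneration

/-- Witness data exhibiting a model structure as cofibrantly generated: a set `I` of
generating cofibrations and a set `J` of generating trivial cofibrations which determine
the (trivial) fibrations by the right lifting property. -/
structure CofibGenData (σ : ModelStructure M) : Type (max u v) where
  I : Set (Arrow M)
  J : Set (Arrow M)
  I_cof : ∀ i ∈ I, σ.cof i.hom
  J_trivCof : ∀ j ∈ J, σ.trivCof j.hom
  fib_iff : ∀ {X Y : M} (p : X ⟶ Y),
    σ.fib p ↔ ∀ j ∈ J, HasLiftingProperty j.hom p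
  trivFib_iff : ∀ {X Y : M} (p : X ⟶ Y),
    σ.trivFib p ↔ ∀ i ∈ I, HasLiftingProperty i.hom p

/-- The domains of `I` and `J` permit the small object argument; here we use the
stronger requirement of smallness relative to the entire category, i.e. strong
cofibrant generation. -/
def CofibGenData.SmallDomains [HasColimits M] {σ : ModelStructure M} (d : CofibGenData σ) : Prop :=
  ∀ f ∈ d.I ∪ d.J, IsSmallRelEntire f.left

/-- The codomains of `I` and `J` are small relative to the entire category. -/
def CofibGenData.SmallCodomains [HasColimits M] {σ : ModelStructure M} (d : CofibGenData σ) : Prop :=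
  ∀ f ∈ d.I ∪ d.J, IsSmallRelEntire f.right

/-- A strongly cofibrantly generated model structure: the domains of the generating
(trivial) cofibrations are small relative to the entire category. -/
def StronglyCofibrantlyGenerated [HasColimits M] (σ : ModelStructure M) : Prop :=
  ∃ d : CofibGenData σ, d.SmallDomains

end CofibrantGeneration

variable {N : Type u} [Category.{v} N]

/-- A biased tensor-like structure on a category: a bifunctor (in uncurried form)
together with a unit object. -/
structure TensorData (N : Type u) [Category.{v} N] : Type (max u v) where
  t : N → N → N
  tmap : ∀ {A B X Y : N}, (A ⟶ B) → (X ⟶ Y) → (t A X ⟶ t B Y)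
  unit : N
  tmap_id : ∀ (A X : N), tmap (𝟙 A) (𝟙 X) = 𝟙 (t A X)
  tmap_comp : ∀ {A B C X Y Z : N} (f : A ⟶ B) (f' : B ⟶ C) (g : X ⟶ Y) (g' : Y ⟶ Z),
    tmap (f ≫ f') (g ≫ g') = tmap f g ≫ tmap f' g'

namespace TensorData

/-- The tensor data underlying a monoidal category. -/
@[simps]
def ofMonoidal (M : Type u) [Category.{v} M] [MonoidalCategory M] : TensorData M where
  t X Y := X ⊗ Y
  tmap f g := f ⊗ₘ g
  unit := 𝟙_ M
  tmap_id _ _ := id_tensorHom_id _ _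
  tmap_comp _ _ _ _ := (tensorHom_comp_tensorHom _ _ _ _).symm

/-- Iterated (right-biased) tensor product of a finite family of objects. -/
def tFin (τ : TensorData N) : ∀ {n : ℕ}, (Fin n → N) → N
  | 0, _ => τ.unit
  | _ + 1, f => τ.t (f 0) (tFin τ fun i => f i.succ)

@[simp] theorem tFin_zero (τ : TensorData N) (f : Fin 0 → N) : tFin τ f = τ.unit := rfl
theorem tFin_succ (τ : TensorData N) {n : ℕ} (f : Fin (n + 1) → N) :
    tFin τ f = τ.t (f 0) (tFin τ fun i => f i.succ) := rfl

/-- Iterated tensor product of a finite family of morphisms. -/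
def tFinMap (τ : TensorData N) :
    ∀ {n : ℕ} {f g : Fin n → N}, (∀ i, f i ⟶ g i) → (tFin τ f ⟶ tFin τ g)
  | 0, _, _, _ => 𝟙 τ.unit
  | _ + 1, _, _, h => τ.tmap (h 0) (tFinMap τ fun i => h i.succ)

@[simp] theorem tFinMap_zero (τ : TensorData N) {f g : Fin 0 → N} (h : ∀ i, f i ⟶ g i) :
    tFinMap τ h = 𝟙 τ.unit := rfl
theorem tFinMap_succ (τ : TensorData N) {n : ℕ} {f g : Fin (n + 1) → N} (h : ∀ i, f i ⟶ g i) :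
    tFinMap τ h = τ.tmap (h 0) (tFinMap τ fun i => h i.succ) := rfl

theorem tFinMap_id (τ : TensorData N) : ∀ {n : ℕ} (f : Fin n → N),
    tFinMap τ (fun i => 𝟙 (f i)) = 𝟙 (tFin τ f) := by
  intro n
  induction n with
  | zero => intro f; rfl
  | succ n ih =>
      intro f
      rw [tFinMap_succ, ih]
      exact τ.tmap_id _ _

theorem tFinMap_comp (τ : TensorData N) :
    ∀ {n : ℕ} {f g h : Fin n → N} (α : ∀ i, f i ⟶ g i) (β : ∀ i, g i ⟶ h i),
    tFinMap τ (fun i => α i ≫ β i) = tFinMap τ α ≫ tFinMap τ β := by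
  intro n
  induction n with
  | zero => intro _ _ _ _ _; exact (comp_id _).symm
  | succ n ih =>
      intro f g h α β
      rw [tFinMap_succ, tFinMap_succ, tFinMap_succ, ih]
      exact τ.tmap_comp _ _ _ _

/-- The "tensor product" tensor data on the arrow category (the monoidal product of
`f` and `g` is `f ⊗ g : X₀ ⊗ Y₀ ⟶ X₁ ⊗ Y₁`), with unit `𝟙 : 𝟙 ⟶ 𝟙`. -/
@[simps]
def arrowTensor (M : Type u) [Category.{v} M] [MonoidalCategory M] : TensorData (Arrow M) where
  t f g := Arrow.mk (f.hom ⊗ₘ g.hom)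
  tmap {f f' g g'} α β := Arrow.homMk (u := α.left ⊗ₘ β.left) (v := α.right ⊗ₘ β.right)
    (by dsimp; rw [tensorHom_comp_tensorHom, tensorHom_comp_tensorHom, Arrow.w, Arrow.w])
  unit := Arrow.mk (𝟙 (𝟙_ M))
  tmap_id f g := by ext <;> simp
  tmap_comp f f' g g' := by ext <;> simp

section PP
variable [HasPushouts N]

/-- The pushout product of two objects of the arrow category, relative to arbitrary
tensor data `τ` on `N`. -/
noncomputable def ppObj (τ : TensorData N) (f g : Arrow N) : Arrow N :=
  Arrow.mk (pushout.desc (f := τ.tmap (𝟙 f.left) g.hom) (g := τ.tmap f.hom (𝟙 g.left))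
    (τ.tmap f.hom (𝟙 g.right)) (τ.tmap (𝟙 f.right) g.hom)
    (by rw [← τ.tmap_comp, ← τ.tmap_comp]; simp))

@[simp] theorem ppObj_left (τ : TensorData N) (f g : Arrow N) :
    (τ.ppObj f g).left = pushout (τ.tmap (𝟙 f.left) g.hom) (τ.tmap f.hom (𝟙 g.left)) := rfl
@[simp] theorem ppObj_right (τ : TensorData N) (f g : Arrow N) :
    (τ.ppObj f g).right = τ.t f.right g.right := rfl
theorem ppObj_hom (τ : TensorData N) (f g : Arrow N) :
    (τ.ppObj f g).hom = pushout.desc (τ.tmap f.hom (𝟙 g.right)) (τ.tmap (𝟙 f.right) g.hom)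
      (by rw [← τ.tmap_comp, ← τ.tmap_comp]; simp) := rfl

/-- The map between pushout-product domains induced by maps of arrows. -/
noncomputable def ppDom (τ : TensorData N) {f f' g g' : Arrow N} (α : f ⟶ f') (β : g ⟶ g') :
    (τ.ppObj f g).left ⟶ (τ.ppObj f' g').left :=
  pushout.map _ _ _ _ (τ.tmap α.left β.right) (τ.tmap α.right β.left)
      (τ.tmap α.left β.left)
      (by rw [← τ.tmap_comp, ← τ.tmap_comp]; simp [Arrow.w])
      (by rw [← τ.tmap_comp, ← τ.tmap_comp]; simp [Arrow.w])

theorem ppDom_w (τ : TensorData N) {f f' g g' : Arrow N} (α : f ⟶ f') (β : g ⟶ g') :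
    τ.ppDom α β ≫ (τ.ppObj f' g').hom = (τ.ppObj f g).hom ≫ τ.tmap α.right β.right := by
  unfold ppDom
  dsimp only [ppObj, Arrow.mk_left, Arrow.mk_hom]
  apply pushout.hom_ext
  · simp only [Category.assoc, pushout.inl_desc, pushout.inl_desc_assoc]
    rw [← τ.tmap_comp, ← τ.tmap_comp]
    simp [Arrow.w]
  · simp only [Category.assoc, pushout.inr_desc, pushout.inr_desc_assoc]
    rw [← τ.tmap_comp, ← τ.tmap_comp]
    simp [Arrow.w]

/-- The pushout product tensor data on the arrow category of `N`, with a chosen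
unit object `u` (which will be `∅ ⟶ 𝟙`). -/
noncomputable def pp (τ : TensorData N) (u : Arrow N) : TensorData (Arrow N) where
  t := τ.ppObj
  unit := u
  tmap {f f' g g'} α β := Arrow.homMk (u := τ.ppDom α β) (v := τ.tmap α.right β.right)
    (τ.ppDom_w α β)
  tmap_id f g := by
    ext
    · show τ.ppDom (𝟙 f) (𝟙 g) = 𝟙 _
      apply pushout.hom_ext <;> simp [ppDom, τ.tmap_id]
    · exact τ.tmap_id _ _
  tmap_comp α α' β β' := by
    ext
    · show τ.ppDom (α ≫ α') (β ≫ β') = τ.ppDom α β ≫ τ.ppDom α' β'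
      unfold ppDom; dsimp only [ppObj, Arrow.mk_left]
      rw [pushout.map_comp]; simp [τ.tmap_comp]
    · exact τ.tmap_comp _ _ _ _

end PP

end TensorData


section Operads

/-- The groupoid of `C`-profiles: objects are finite lists of colors, and maps are
permutations compatible with the colorings.  This is the groupoid `Σ_C`. -/
structure Profile (C : Type w) : Type w where
  toList : List C

namespace Profile

variable {C : Type w}

instance : Category.{0} (Profile C) where
  Hom p q := {σ : Fin p.toList.length ≃ Fin q.toList.length //
    ∀ i, q.toList.get (σ i) = p.toList.get i}
  id p := ⟨Equiv.refl _, fun _ => rfl⟩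
  comp f g := ⟨f.1.trans g.1, fun i => (g.2 _).trans (f.2 i)⟩
  id_comp f := Subtype.ext (Equiv.ext fun i => rfl)
  comp_id f := Subtype.ext (Equiv.ext fun i => rfl)
  assoc f g h := Subtype.ext (Equiv.ext fun i => rfl)

/-- The length of a profile. -/
def length (p : Profile C) : ℕ := p.toList.length

/-- The `i`-th color of a profile. -/
def col (p : Profile C) (i : Fin p.toList.length) : C := p.toList.get i

/-- Concatenation of a finite family of profiles. -/
def flatten {n : ℕ} (b : Fin n → Profile C) : Profile C :=
  ⟨(List.ofFn fun i => (b i).toList).flatten⟩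

end Profile

variable {N : Type u} [Category.{v} N] {C : Type w}

/-- The category indexing `C`-colored symmetric sequences: `Σ_Cᵒᵖ × C`. -/
abbrev SymIndex (C : Type w) := (Profile C)ᵒᵖ × Discrete C

/-- A `C`-colored operad (as structured data: a symmetric sequence with units and
composition maps) relative to tensor data `τ` on `N`. -/
structure OperadIn (τ : TensorData N) (C : Type w) : Type (max u v w) where
  seq : SymIndex C ⥤ N
  unit : ∀ c : C, τ.unit ⟶ seq.obj (op ⟨[c]⟩, ⟨c⟩)
  comp : ∀ (p : Profile C) (d : C) (b : Fin p.toList.length → Profile C),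
    τ.t (seq.obj (op p, ⟨d⟩))
        (τ.tFin fun i => seq.obj (op (b i), ⟨p.toList.get i⟩))
      ⟶ seq.obj (op (Profile.flatten b), ⟨d⟩)

/-- The entries of an operad. -/
def OperadIn.entry {τ : TensorData N} (O : OperadIn τ C) (p : Profile C) (d : C) : N :=
  O.seq.obj (op p, ⟨d⟩)

/-- An algebra over an operad (as structured data). -/
structure AlgebraIn (τ : TensorData N) (O : OperadIn τ C) : Type (max u v w) where
  carrier : C → N
  act : ∀ (p : Profile C) (d : C),
    τ.t (O.seq.obj (op p, ⟨d⟩)) (τ.tFin fun i => carrier (p.toList.get i)) ⟶ carrier d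

/-- A morphism of algebras over an operad. -/
structure AlgHom {τ : TensorData N} {O : OperadIn τ C} (A B : AlgebraIn τ O) :
    Type (max v w) where
  app : ∀ c, A.carrier c ⟶ B.carrier c
  comm : ∀ (p : Profile C) (d : C),
    A.act p d ≫ app d
      = τ.tmap (𝟙 (O.seq.obj (op p, ⟨d⟩))) (τ.tFinMap fun i => app (p.toList.get i))
          ≫ B.act p d

theorem AlgHom.ext' {τ : TensorData N} {O : OperadIn τ C} {A B : AlgebraIn τ O}
    {f g : AlgHom A B} (h : ∀ c, f.app c = g.app c) : f = g := by
  cases f; cases g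
  congr 1
  funext c
  exact h c

instance AlgebraIn.category {τ : TensorData N} {O : OperadIn τ C} :
    Category.{max v w} (AlgebraIn τ O) where
  Hom A B := AlgHom A B
  id A := ⟨fun c => 𝟙 _, fun p d => by
    rw [comp_id, τ.tFinMap_id, τ.tmap_id, id_comp]⟩
  comp {A B D} f g := ⟨fun c => f.app c ≫ g.app c, fun p d => by
    rw [← assoc, f.comm p d, assoc, g.comm p d, ← assoc, ← τ.tmap_comp, id_comp,
      ← τ.tFinMap_comp]⟩
  id_comp f := AlgHom.ext' fun c => id_comp _
  comp_id f := AlgHom.ext' fun c => comp_id _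
  assoc f g h := AlgHom.ext' fun c => assoc _ _ _

@[simp] theorem AlgebraIn.id_app {τ : TensorData N} {O : OperadIn τ C} (A : AlgebraIn τ O)
    (c : C) : (𝟙 A : AlgHom A A).app c = 𝟙 (A.carrier c) := rfl

@[simp] theorem AlgebraIn.comp_app {τ : TensorData N} {O : OperadIn τ C}
    {A B D : AlgebraIn τ O} (f : A ⟶ B) (g : B ⟶ D) (c : C) :
    (f ≫ g).app c = f.app c ≫ g.app c := rfl

/-- The forgetful functor from algebras to the underlying `C`-colored objects. -/
@[simps]
def forgetAlg (τ : TensorData N) (O : OperadIn τ C) : AlgebraIn τ O ⥤ (C → N) where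
  obj A := A.carrier
  map f := f.app

end Operads

section ArrowOperads

variable (M : Type u) [Category.{v} M]

/-- The functor `L₀ : M ⥤ M⃗` sending `X` to `𝟙 : X ⟶ X`. -/
@[simps]
def idArrowF : M ⥤ Arrow M where
  obj X := Arrow.mk (𝟙 X)
  map f := Arrow.homMk (u := f) (v := f) (by simp)

/-- The functor `L₁ : M ⥤ M⃗` sending `X` to `∅ ⟶ X`. -/
@[simps]
noncomputable def botArrowF [HasInitial M] : M ⥤ Arrow M where
  obj X := Arrow.mk (initial.to X)
  map f := Arrow.homMk (u := 𝟙 (⊥_ M)) (v := f) (by apply initial.hom_ext)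
  map_id X := by ext <;> simp
  map_comp f g := by ext <;> simp

variable [MonoidalCategory M]

/-- Shorthand for the monoidal tensor data of `M`. -/
noncomputable abbrev monTD : TensorData M := TensorData.ofMonoidal M

/-- Shorthand for the tensor-product tensor data of the arrow category `M⃗⊗`. -/
noncomputable abbrev arrTD : TensorData (Arrow M) := TensorData.arrowTensor M

/-- The pushout product tensor data on the arrow category, `M⃗□`, with its
monoidal unit `∅ ⟶ 𝟙`. -/
noncomputable abbrev ppArrTD [HasInitial M] [HasPushouts M] : TensorData (Arrow M) :=
  (monTD M).pp (Arrow.mk (initial.to (𝟙_ M)))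

variable {M}

theorem tObj_idArrowF (X Y : M) :
    (arrTD M).t ((idArrowF M).obj X) ((idArrowF M).obj Y) = (idArrowF M).obj (X ⊗ Y) := by
  show Arrow.mk (𝟙 X ⊗ₘ 𝟙 Y) = Arrow.mk (𝟙 (X ⊗ Y))
  rw [id_tensorHom_id]

theorem tFin_idArrowF {n : ℕ} (F : Fin n → M) :
    (arrTD M).tFin (fun i => (idArrowF M).obj (F i)) = (idArrowF M).obj ((monTD M).tFin F) := by
  induction n with
  | zero => rfl
  | succ n ih =>
      rw [TensorData.tFin_succ, TensorData.tFin_succ, ih (fun i => F i.succ)]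
      show Arrow.mk (𝟙 (F 0) ⊗ₘ 𝟙 _) = _
      rw [id_tensorHom_id]
      rfl

/-- The operad `O⃗⊗ = L₀O` in the arrow category with the tensor product structure. -/
noncomputable def arrowTensorOperad {C : Type w} (O : OperadIn (monTD M) C) :
    OperadIn (arrTD M) C where
  seq := O.seq ⋙ idArrowF M
  unit c := (idArrowF M).map (O.unit c)
  comp p d b := eqToHom (by
      simp only [Functor.comp_obj]
      rw [tFin_idArrowF, tObj_idArrowF]
      rfl) ≫ (idArrowF M).map (O.comp p d b)

section PPOperad

variable [HasInitial M] [HasPushouts M]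

/-- The hypothesis that the monoidal product preserves initial objects in each
variable (automatic when `M` is symmetric monoidal closed, i.e. when the monoidal
product commutes with colimits on both sides). -/
structure TensorPreservesInitial (M : Type u) [Category.{v} M] [MonoidalCategory M]
    [HasInitial M] : Prop where
  left : ∀ (X Y : M), IsInitial X → Nonempty (IsInitial (X ⊗ Y))
  right : ∀ (X Y : M), IsInitial Y → Nonempty (IsInitial (X ⊗ Y))

/-- A pushout of initial objects is initial. -/
noncomputable def isInitialPushout {A B D : M} {f : A ⟶ B} {g : A ⟶ D}
    (hA : IsInitial A) (hB : IsInitial B) (hD : IsInitial D) :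
    IsInitial (pushout f g) :=
  IsInitial.ofUniqueHom (fun Z => pushout.desc (hB.to Z) (hD.to Z) (hA.hom_ext _ _))
    (fun Z m => pushout.hom_ext ((hB.hom_ext _ _).trans (by rw [pushout.inl_desc]))
      ((hD.hom_ext _ _).trans (by rw [pushout.inr_desc])))

theorem ppObj_left_isInitial (h : TensorPreservesInitial M) {f g : Arrow M}
    (hf : Nonempty (IsInitial f.left)) (hg : Nonempty (IsInitial g.left)) :
    Nonempty (IsInitial ((monTD M).ppObj f g).left) := by
  obtain ⟨hf⟩ := hf
  obtain ⟨hg⟩ := hg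
  obtain ⟨h1⟩ := h.left f.left g.right hf
  obtain ⟨h2⟩ := h.right f.right g.left hg
  obtain ⟨h0⟩ := h.left f.left g.left hf
  exact ⟨isInitialPushout h0 h1 h2⟩

theorem tFin_pp_left_isInitial (h : TensorPreservesInitial M) : ∀ {n : ℕ} (F : Fin n → M),
    Nonempty (IsInitial ((ppArrTD M).tFin (fun i => (botArrowF M).obj (F i))).left) := by
  intro n
  induction n with
  | zero => exact fun _ => ⟨initialIsInitial⟩
  | succ n ih =>
      intro F
      exact ppObj_left_isInitial h ⟨initialIsInitial⟩ (ih fun i => F i.succ)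

theorem tFin_pp_right {n : ℕ} (F : Fin n → M) :
    ((ppArrTD M).tFin (fun i => (botArrowF M).obj (F i))).right = (monTD M).tFin F := by
  induction n with
  | zero => rfl
  | succ n ih =>
      rw [TensorData.tFin_succ ((monTD M))]
      show (F 0) ⊗ ((ppArrTD M).tFin fun i => (botArrowF M).obj (F i.succ)).right = _
      rw [ih (fun i => F i.succ)]
      rfl

/-- The operad `O⃗□ = L₁O` in the arrow category with the pushout product structure.
Its algebras are the Smith `O`-ideals. -/
noncomputable def arrowPPOperad (h : TensorPreservesInitial M) {C : Type w}
    (O : OperadIn (monTD M) C) : OperadIn (ppArrTD M) C where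
  seq := O.seq ⋙ botArrowF M
  unit c := (botArrowF M).map (O.unit c)
  comp p d b :=
    Arrow.homMk
      (u := ((ppObj_left_isInitial h ⟨initialIsInitial⟩
          (tFin_pp_left_isInitial h fun i => O.seq.obj (op (b i), ⟨p.toList.get i⟩))).some).to
          (⊥_ M))
      (v := eqToHom (by
        simp only [Functor.comp_obj]
        show ((monTD M).ppObj ((botArrowF M).obj (O.seq.obj (op p, ⟨d⟩)))
            ((ppArrTD M).tFin fun i =>
              (botArrowF M).obj (O.seq.obj (op (b i), ⟨p.toList.get i⟩)))).right = _
        rw [TensorData.ppObj_right, tFin_pp_right]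
        rfl) ≫ O.comp p d b)
      (((ppObj_left_isInitial h ⟨initialIsInitial⟩
          (tFin_pp_left_isInitial h fun i => O.seq.obj (op (b i), ⟨p.toList.get i⟩))).some).hom_ext
          _ _)

end PPOperad

end ArrowOperads

section CokerKer

variable (M : Type u) [Category.{v} M] [HasZeroMorphisms M]

/-- The cokernel functor `M⃗□ ⥤ M⃗⊗`, sending `f : X₀ ⟶ X₁` to
`coker f : X₁ ⟶ coker f`. -/
@[simps]
noncomputable def cokerF [HasCokernels M] : Arrow M ⥤ Arrow M where
  obj f := Arrow.mk (cokernel.π f.hom)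
  map {f g} α := Arrow.homMk (u := α.right)
    (v := cokernel.map f.hom g.hom α.left α.right (Arrow.w α).symm) (by simp)
  map_id f := by ext <;> simp [cokernel.map]
  map_comp α β := by
    ext
    · simp
    · apply coequalizer.hom_ext; simp [cokernel.map]

/-- The kernel functor `M⃗⊗ ⥤ M⃗□`, sending `g : Y₀ ⟶ Y₁` to `ker g : ker g ⟶ Y₀`. -/
@[simps]
noncomputable def kerF [HasKernels M] : Arrow M ⥤ Arrow M where
  obj g := Arrow.mk (kernel.ι g.hom)
  map {f g} α := Arrow.homMk (u := kernel.map f.hom g.hom α.left α.right (Arrow.w α).symm)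
    (v := α.left) (by simp)
  map_id f := by ext <;> simp [kernel.map]
  map_comp α β := by
    ext
    · apply equalizer.hom_ext; simp [kernel.map]
    · simp

end CokerKer

section Equivariant

/-- Left `Σₙ`-objects in `N` (objects with a left action of the symmetric group). -/
abbrev LeftSym (n : ℕ) (N : Type u) [Category.{v} N] :=
  SingleObj (Equiv.Perm (Fin n)) ⥤ N

/-- Right `Σₙ`-objects in `N` (i.e. objects of `N^{Σₙᵒᵖ}`). -/
abbrev RightSym (n : ℕ) (N : Type u) [Category.{v} N] :=
  (SingleObj (Equiv.Perm (Fin n)))ᵒᵖ ⥤ N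

variable {N : Type u} [Category.{v} N] {n : ℕ}

/-- The basepoint of `SingleObj (Σₙ)`. -/
abbrev symStar (n : ℕ) : SingleObj (Equiv.Perm (Fin n)) :=
  SingleObj.star (Equiv.Perm (Fin n))

/-- Reinterpret an endomorphism of the basepoint as a permutation. -/
def toPerm {x y : SingleObj (Equiv.Perm (Fin n))} (σ : x ⟶ y) : Equiv.Perm (Fin n) := σ

/-- Reinterpret a permutation as an endomorphism of the basepoint. -/
def ofPerm (σ : Equiv.Perm (Fin n)) :
    symStar n ⟶ symStar n := σ

/-- Convert a right `Σₙ`-object into a left `Σₙ`-object via inverses. -/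
def leftify (F : RightSym n N) : LeftSym n N where
  obj _ := F.obj (op (symStar n))
  map {x y} σ := F.map (ofPerm (toPerm σ)⁻¹).op
  map_id x := by
    have e : ofPerm (n := n) (toPerm (𝟙 x))⁻¹ = 𝟙 x := by
      show ((1 : Equiv.Perm (Fin n)))⁻¹ = (1 : Equiv.Perm (Fin n))
      rw [inv_one]
    show F.map (ofPerm (toPerm (𝟙 x))⁻¹).op = 𝟙 _
    rw [e]
    exact F.map_id _
  map_comp {x y z} σ τ' := by
    have e : ofPerm (n := n) (toPerm (σ ≫ τ'))⁻¹ =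
        ofPerm (toPerm τ')⁻¹ ≫ ofPerm (toPerm σ)⁻¹ := by
      show (toPerm τ' * toPerm σ : Equiv.Perm (Fin n))⁻¹ =
        (toPerm σ)⁻¹ * (toPerm τ')⁻¹
      rw [mul_inv_rev]
    show F.map (ofPerm (toPerm (σ ≫ τ'))⁻¹).op = F.map _ ≫ F.map _
    rw [e]
    exact F.map_comp _ _

/-- The uncurried bifunctor associated to tensor data. -/
@[simps]
def TensorData.bif (τ : TensorData N) : N × N ⥤ N where
  obj X := τ.t X.1 X.2
  map f := τ.tmap f.1 f.2
  map_id X := τ.tmap_id X.1 X.2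
  map_comp f g := τ.tmap_comp _ _ _ _

/-- The bifunctor `(X, g) ↦ (X ⊗ g : X ⊗ Y₀ ⟶ X ⊗ Y₁)`, tensoring an object with an
arrow. -/
@[simps]
def TensorData.bifArrow (τ : TensorData N) : N × Arrow N ⥤ Arrow N where
  obj X := Arrow.mk (τ.tmap (𝟙 X.1) X.2.hom)
  map {X Y} f := Arrow.homMk (u := τ.tmap f.1 f.2.left) (v := τ.tmap f.1 f.2.right)
    (by dsimp; rw [← τ.tmap_comp, ← τ.tmap_comp, comp_id, id_comp, Arrow.w])
  map_id X := by
    ext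
    · exact τ.tmap_id _ _
    · exact τ.tmap_id _ _
  map_comp f g := by
    ext
    · exact τ.tmap_comp _ _ _ _
    · exact τ.tmap_comp _ _ _ _

/-- The diagonal `Σₙ`-object `X ⊗ Y` obtained from a right `Σₙ`-object `X` and a left
`Σₙ`-object `Y`. -/
def diagObj (τ : TensorData N) (F : RightSym n N) (G : LeftSym n N) : LeftSym n N :=
  (leftify F).prod' G ⋙ τ.bif

/-- The diagonal `Σₙ`-arrow `X ⊗ g` obtained from a right `Σₙ`-object `X` of `N` and a
left `Σₙ`-object `g` of arrows of `N`. -/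
def diagArrow (τ : TensorData N) (F : RightSym n N) (G : LeftSym n (Arrow N)) :
    LeftSym n (Arrow N) :=
  (leftify F).prod' G ⋙ τ.bifArrow

/-- The `Σₙ`-coinvariants of a left `Σₙ`-object of arrows, as a map:
`(colim K₀) ⟶ (colim K₁)`. -/
noncomputable def coinvHom [HasColimitsOfSize.{0, 0} N] (K : LeftSym n (Arrow N)) :
    colimit (K ⋙ Arrow.leftFunc) ⟶ colimit (K ⋙ Arrow.rightFunc) :=
  colimMap (Functor.whiskerLeft K Arrow.leftToRight)

/-- Iterated pushout product powers: `ppPow τ g n` is the `(n+1)`-st pushout product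
power `g^{□(n+1)}` of the arrow `g` relative to tensor data `τ`. -/
noncomputable def ppPow (τ : TensorData N) [HasPushouts N] (g : Arrow N) : ℕ → Arrow N
  | 0 => g
  | n + 1 => τ.ppObj g (ppPow τ g n)

end Equivariant

section StructurePredicates

variable {M : Type u} [Category.{v} M]

/-- `σA` is the injective model structure on the arrow category of `(M, σ)`: weak
equivalences and cofibrations are defined entrywise. -/
def IsInjectiveStructure (σ : ModelStructure M) (σA : ModelStructure (Arrow M)) : Prop :=
  (∀ (f g : Arrow M) (α : f ⟶ g), σA.weq α ↔ (σ.weq α.left ∧ σ.weq α.right)) ∧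
  (∀ (f g : Arrow M) (α : f ⟶ g), σA.cof α ↔ (σ.cof α.left ∧ σ.cof α.right))

/-- `σA` is the projective model structure on the arrow category of `(M, σ)`: weak
equivalences and fibrations are defined entrywise. -/
def IsProjectiveStructure (σ : ModelStructure M) (σA : ModelStructure (Arrow M)) : Prop :=
  (∀ (f g : Arrow M) (α : f ⟶ g), σA.weq α ↔ (σ.weq α.left ∧ σ.weq α.right)) ∧
  (∀ (f g : Arrow M) (α : f ⟶ g), σA.fib α ↔ (σ.fib α.left ∧ σ.fib α.right))

/-- Entrywise trivial fibrations in a pi category; these are the trivial fibrations of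
the projective model structure on `M^C`. -/
def piTrivFib (C : Type w) (σ : ModelStructure M) : MorphismProperty (C → M) :=
  fun _ _ p => ∀ c, σ.trivFib (p c)

/-- Entrywise trivial fibrations in a functor category; these are the trivial
fibrations of the projective model structure on `M^D`. -/
def functorTrivFib (D : Type w) [Category.{w'} D] (σ : ModelStructure M) :
    MorphismProperty (D ⥤ M) :=
  fun _ _ p => ∀ d, σ.trivFib (p.app d)

/-- An object is cofibrant with respect to a class `T` of "trivial fibrations":
every map to the codomain of a map in `T` lifts. -/
def LLPCofibrant {A : Type u'} [Category.{v'} A] (T : MorphismProperty A) (X : A) : Prop :=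
  ∀ {Y Z : A} (p : Y ⟶ Z), T p → ∀ h : X ⟶ Z, ∃ l : X ⟶ Y, l ≫ p = h

/-- A Quillen adjunction between model structures: the right adjoint preserves
fibrations and trivial fibrations. -/
def IsQuillenAdjunction {D : Type u'} [Category.{v'} D]
    (σC : ModelStructure M) (σD : ModelStructure D)
    {F : M ⥤ D} {G : D ⥤ M} (_ : F ⊣ G) : Prop :=
  (∀ {X Y : D} (p : X ⟶ Y), σD.fib p → σC.fib (G.map p)) ∧
  (∀ {X Y : D} (p : X ⟶ Y), σD.trivFib p → σC.trivFib (G.map p))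

/-- A Quillen equivalence: a Quillen adjunction such that for `X` cofibrant and `Y`
fibrant, a map `F X ⟶ Y` is a weak equivalence iff its adjoint `X ⟶ G Y` is. -/
def IsQuillenEquivalence {D : Type u'} [Category.{v'} D]
    (σC : ModelStructure M) (σD : ModelStructure D)
    {F : M ⥤ D} {G : D ⥤ M} (adj : F ⊣ G) : Prop :=
  IsQuillenAdjunction σC σD adj ∧
  ∀ {X : M} {Y : D} (f : F.obj X ⟶ Y), σC.Cofibrant X → σD.Fibrant Y →
    (σD.weq f ↔ σC.weq ((adj.homEquiv X Y) f))

/-- An operad `O` is admissible relative to a model structure `σ` on the base: the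
category of `O`-algebras carries a cofibrantly generated model structure whose weak
equivalences and fibrations are defined entrywise. -/
def Admissible {N : Type u} [Category.{v} N] {C : Type w} (τ : TensorData N)
    (σ : ModelStructure N) (O : OperadIn τ C) : Prop :=
  ∃ σA : ModelStructure (AlgebraIn τ O), Nonempty (CofibGenData σA) ∧
    (∀ (A B : AlgebraIn τ O) (h : A ⟶ B),
      σA.weq h ↔ ∀ c, σ.weq (AlgHom.app h c)) ∧
    (∀ (A B : AlgebraIn τ O) (h : A ⟶ B),
      σA.fib h ↔ ∀ c, σ.fib (AlgHom.app h c))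

end StructurePredicates

section Conditions

variable {N : Type u} [Category.{v} N]

/-- Condition (♠) of White–Yau, for tensor data `τ` on `N`: for each `n ≥ 1` and each
right `Σₙ`-object `X`, the functor `X ⊗_{Σₙ} (−)^{□n}` sends trivial cofibrations into
some subclass of weak equivalences closed under pushout and transfinite composition.
(The `Σₙ`-equivariant structure on the power `g^{□n}` is quantified over all
equivariant structures with the given underlying object.) -/
def SpadeCondition [HasColimits N] [HasPushouts N] (τ : TensorData N)
    (σ : ModelStructure N) : Prop :=
  ∀ (n : ℕ) (X : RightSym (n + 1) N),
    ∃ W : MorphismProperty N,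
      (∀ ⦃A B : N⦄ (f : A ⟶ B), W f → σ.weq f) ∧
      StableUnderPushout W ∧
      StableUnderTransfiniteComposition W ∧
      ∀ (g : Arrow N), σ.trivCof g.hom →
        ∀ (P : LeftSym (n + 1) (Arrow N)),
          P.obj (symStar (n + 1)) = ppPow τ g n →
          W (coinvHom (diagArrow τ X P))

/-- Condition (♣)_{cof} of White–Yau for tensor data `τ`: for each `n ≥ 1` and each
underlying-cofibrant right `Σₙ`-object `X`, the functor `X ⊗_{Σₙ} (−)^{□n}` preserves
cofibrations. -/
def ClubCofCondition [HasColimits N] [HasPushouts N] (τ : TensorData N)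
    (σ : ModelStructure N) : Prop :=
  ∀ (n : ℕ) (X : RightSym (n + 1) N), σ.Cofibrant (X.obj (op (symStar (n + 1)))) →
    ∀ (g : Arrow N), σ.cof g.hom →
      ∀ (P : LeftSym (n + 1) (Arrow N)),
        P.obj (symStar (n + 1)) = ppPow τ g n →
        σ.cof (coinvHom (diagArrow τ X P))

/-- The pushout product axiom for a model structure, relative to tensor data `τ`. -/
def SatisfiesPPAxiom [HasPushouts N] (τ : TensorData N) (σ : ModelStructure N) : Prop :=
  (∀ (f g : Arrow N), σ.cof f.hom → σ.cof g.hom → σ.cof (τ.ppObj f g).hom) ∧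
  (∀ (f g : Arrow N), σ.cof f.hom → σ.cof g.hom → σ.weq f.hom ∨ σ.weq g.hom →
    σ.weq (τ.ppObj f g).hom)

variable {M : Type u} [Category.{v} M] [MonoidalCategory M]

/-- Condition (♥) of White–Yau: for each `n ≥ 1` and each `Σₙ`-equivariant map `f`
which is an underlying cofibration between cofibrant objects, the functor
`f □_{Σₙ} (−) : M^{Σₙ} → M` takes underlying cofibrations to cofibrations. -/
def HeartCondition [HasColimits M] (σ : ModelStructure M) : Prop :=
  ∀ (n : ℕ) (F : RightSym (n + 1) (Arrow M)),
    σ.cof (F.obj (op (symStar (n + 1)))).hom →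
    σ.Cofibrant (F.obj (op (symStar (n + 1)))).left →
    σ.Cofibrant (F.obj (op (symStar (n + 1)))).right →
    ∀ (G : LeftSym (n + 1) (Arrow M)), σ.cof (G.obj (symStar (n + 1))).hom →
      σ.cof (coinvHom (diagObj ((monTD M).pp (Arrow.mk (initial.to (𝟙_ M)))) F G))

/-- The strong commutative monoid axiom of White: `(−)^{□n}/Σₙ` preserves cofibrations
and trivial cofibrations. -/
def StrongCommutativeMonoidAxiom [HasColimits M] (σ : ModelStructure M) : Prop :=
  ∀ (n : ℕ) (g : Arrow M) (P : LeftSym (n + 1) (Arrow M)),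
    P.obj (symStar (n + 1)) = ppPow (monTD M) g n →
    (σ.cof g.hom → σ.cof (coinvHom P)) ∧ (σ.trivCof g.hom → σ.trivCof (coinvHom P))

end Conditions

section Stability

variable {M : Type u} [Category.{v} M] [HasZeroMorphisms M] [HasKernels M] [HasCokernels M]

/-- Stability of a model structure.  (A pointed model category is stable when its
homotopy category is triangulated; by Hovey's theorem this holds exactly when
cokernel/kernel give a Quillen equivalence between the projective model structure
on `M⃗□` and the injective model structure on `M⃗⊗`, which is the formulation used
here.) -/
def IsStable (σ : ModelStructure M) : Prop :=
  HasZeroObject M ∧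
  ∀ (σp σi : ModelStructure (Arrow M)), IsProjectiveStructure σ σp →
    IsInjectiveStructure σ σi →
    ∀ (adj : cokerF M ⊣ kerF M), IsQuillenEquivalence σp σi adj

end Stability

section MoreGadgets

variable {M : Type u} [Category.{v} M] [MonoidalCategory M]

/-- Folding the iterated tensor power of the unit onto the unit. -/
noncomputable def unitFold (M : Type u) [Category.{v} M] [MonoidalCategory M] :
    ∀ n : ℕ, ((monTD M).tFin (fun _ : Fin n => 𝟙_ M)) ⟶ 𝟙_ M
  | 0 => 𝟙 _
  | n + 1 => ((𝟙_ M) ◁ unitFold M n) ≫ (λ_ (𝟙_ M)).hom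

/-- The commutative operad: each entry is the monoidal unit. -/
noncomputable def commOperad (M : Type u) [Category.{v} M] [MonoidalCategory M] :
    OperadIn (monTD M) PUnit where
  seq := (Functor.const (SymIndex PUnit)).obj (𝟙_ M)
  unit _ := 𝟙 (𝟙_ M)
  comp p d b := ((𝟙_ M) ◁ unitFold M _) ≫ (λ_ (𝟙_ M)).hom

section Bimodules

variable {C : Type w} (O : OperadIn (monTD M) C)

/-- A bimodule over an algebra `A` for the operad `O`. -/
structure Bimodule (A : AlgebraIn (monTD M) O) : Type (max u v w) where
  X : C → M
  act : ∀ (p : Profile C) (d : C) (i : Fin p.toList.length),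
    (monTD M).t (O.seq.obj (op p, ⟨d⟩))
      ((monTD M).tFin fun j =>
        if j = i then X (p.toList.get j) else A.carrier (p.toList.get j))
      ⟶ X d

variable {O}

/-- The comparison maps `(mixed family with X at position i) ⟶ (family of A's)`
induced by a family of maps `f : X ⟶ A`: apply `f` in position `i`. -/
def mixMap {X A : C → M} (f : ∀ c, X c ⟶ A c) {n : ℕ} (cols : Fin n → C) (i : Fin n) :
    ∀ j, (if j = i then X (cols j) else A (cols j)) ⟶ A (cols j) := fun j =>
  if h : j = i then eqToHom (if_pos h) ≫ f (cols j) else eqToHom (if_neg h)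

/-- From the family with `X` in positions `i` and `j`, apply `f` at position `j`,
landing in the family with `X` at position `i`. -/
def dropSecond {X A : C → M} (f : ∀ c, X c ⟶ A c) {n : ℕ} (cols : Fin n → C) (i j : Fin n) :
    ∀ k, (if k = i ∨ k = j then X (cols k) else A (cols k)) ⟶
      (if k = i then X (cols k) else A (cols k)) := fun k =>
  if h1 : k = i then eqToHom (by rw [if_pos (Or.inl h1), if_pos h1])
  else if h2 : k = j then
    eqToHom (if_pos (Or.inr h2)) ≫ f (cols k) ≫ eqToHom ((if_neg h1).symm)
  else eqToHom (by rw [if_neg (not_or.mpr ⟨h1, h2⟩), if_neg h1])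

/-- From the family with `X` in positions `i` and `j`, apply `f` at position `i`,
landing in the family with `X` at position `j`. -/
def dropFirst {X A : C → M} (f : ∀ c, X c ⟶ A c) {n : ℕ} (cols : Fin n → C) (i j : Fin n) :
    ∀ k, (if k = i ∨ k = j then X (cols k) else A (cols k)) ⟶
      (if k = j then X (cols k) else A (cols k)) := fun k =>
  if h2 : k = j then eqToHom (by rw [if_pos (Or.inr h2), if_pos h2])
  else if h1 : k = i then
    eqToHom (if_pos (Or.inl h1)) ≫ f (cols k) ≫ eqToHom ((if_neg h2).symm)
  else eqToHom (by rw [if_neg (not_or.mpr ⟨h1, h2⟩), if_neg h2])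

/-- The data described in Proposition `smith-unravel` of White–Yau: an `O`-algebra
`Y`, a `Y`-bimodule `X`, and a `Y`-bimodule map `f : X ⟶ Y` satisfying the
compatibility condition (two-x). -/
structure SmithTriple (O : OperadIn (monTD M) C) : Type (max u v w) where
  alg : AlgebraIn (monTD M) O
  mod : Bimodule O alg
  f : ∀ c, mod.X c ⟶ alg.carrier c
  /-- `f` is a map of `alg`-bimodules from `mod` to `alg` itself. -/
  f_bimod : ∀ (p : Profile C) (d : C) (i : Fin p.toList.length),
    mod.act p d i ≫ f d =
      (monTD M).tmap (𝟙 (O.seq.obj (op p, ⟨d⟩)))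
        ((monTD M).tFinMap (mixMap f (fun j => p.toList.get j) i)) ≫ alg.act p d
  /-- the diagram (two-x): using `f` in position `i` or in position `j` first, then
  acting, gives the same composite. -/
  two_x : ∀ (p : Profile C) (d : C) (i j : Fin p.toList.length), i ≠ j →
    (monTD M).tmap (𝟙 (O.seq.obj (op p, ⟨d⟩)))
        ((monTD M).tFinMap (dropSecond f (fun k => p.toList.get k) i j)) ≫ mod.act p d i =
    (monTD M).tmap (𝟙 (O.seq.obj (op p, ⟨d⟩)))
        ((monTD M).tFinMap (dropFirst f (fun k => p.toList.get k) i j)) ≫ mod.act p d j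

end Bimodules

section Concentrated

variable {N : Type u} [Category.{v} N] [HasInitial N] {C : Type w} [DecidableEq C]

/-- The `C`-colored object concentrated at the color `c`, with all other entries
initial. -/
noncomputable def conc (c : C) (x : N) : C → N := fun c' => if c' = c then x else ⊥_ N

/-- The morphism of concentrated objects induced by `φ : x ⟶ y`. -/
noncomputable def concMap (c : C) {x y : N} (φ : x ⟶ y) : conc (N := N) c x ⟶ conc c y :=
  fun c' =>
    if h : c' = c then
      eqToHom (by simp only [conc, if_pos h]) ≫ φ ≫ eqToHom (by simp only [conc, if_pos h])
    else eqToHom (by simp only [conc, if_neg h])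

end Concentrated

section Corner

variable {N : Type u} [Category.{v} N] [HasPushouts N]

/-- The pushout corner map of a morphism `Q : A ⟶ B` of the arrow category of `N`
(viewing `Q` as a commutative square in `N`). -/
noncomputable def cornerMap {A B : Arrow N} (Q : A ⟶ B) : pushout A.hom Q.left ⟶ B.right :=
  pushout.desc Q.right B.hom (Arrow.w Q).symm

end Corner

section SigmaCof

variable {N : Type u} [Category.{v} N] {C : Type w}

/-- A symmetric sequence is `Σ_C`-cofibrant: cofibrant in the projective model
structure on the diagram category `N^{Σ_Cᵒᵖ × C}` (formulated by the lifting property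
against entrywise trivial fibrations). -/
def SeqCofibrant (σ : ModelStructure N) (S : SymIndex C ⥤ N) : Prop :=
  LLPCofibrant (functorTrivFib (SymIndex C) σ) S

end SigmaCof

end MoreGadgets

section AlgebraStructures

variable {M : Type u} [Category.{v} M] {C : Type w}

/-- `σA` is the transferred ("Smith ideal") model structure on algebras over an operad
in the arrow category of `M`: weak equivalences and fibrations are defined colorwise in
the projective model structure on `M⃗`, i.e. entrywise in `M`. -/
def IsEntrywiseArrowStructure (σ : ModelStructure M) {τ : TensorData (Arrow M)}
    (O : OperadIn τ C) (σA : ModelStructure (AlgebraIn τ O)) : Prop :=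
  (∀ (A B : AlgebraIn τ O) (h : A ⟶ B),
    σA.weq h ↔ ∀ c, σ.weq (AlgHom.app h c).left ∧ σ.weq (AlgHom.app h c).right) ∧
  (∀ (A B : AlgebraIn τ O) (h : A ⟶ B),
    σA.fib h ↔ ∀ c, σ.fib (AlgHom.app h c).left ∧ σ.fib (AlgHom.app h c).right)

/-- `σA` is the transferred model structure on algebras over an operad in the arrow
category of `M`, with weak equivalences and fibrations defined colorwise in the
injective model structure `σi` on `M⃗`. -/
def IsEntrywiseInjStructure (σi : ModelStructure (Arrow M)) {τ : TensorData (Arrow M)}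
    (O : OperadIn τ C) (σA : ModelStructure (AlgebraIn τ O)) : Prop :=
  (∀ (A B : AlgebraIn τ O) (h : A ⟶ B), σA.weq h ↔ ∀ c, σi.weq (AlgHom.app h c)) ∧
  (∀ (A B : AlgebraIn τ O) (h : A ⟶ B), σA.fib h ↔ ∀ c, σi.fib (AlgHom.app h c))

/-- The trivial fibrations of the transferred model structure on algebras over an
operad in `M⃗□`: maps which are colorwise trivial fibrations in `M⃗_proj`, i.e.
entrywise trivial fibrations in `M`. -/
def algTrivFib (σ : ModelStructure M) {τ : TensorData (Arrow M)} (O : OperadIn τ C) :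
    MorphismProperty (AlgebraIn τ O) :=
  fun _ _ p => ∀ c, σ.trivFib (AlgHom.app p c).left ∧ σ.trivFib (AlgHom.app p c).right

/-- Entrywise trivial fibrations in `(M⃗_proj)^C`. -/
def piArrowProjTrivFib (C : Type w) (σ : ModelStructure M) :
    MorphismProperty (C → Arrow M) :=
  fun _ _ p => ∀ c, σ.trivFib (p c).left ∧ σ.trivFib (p c).right

/-- Entrywise trivial fibrations in `(M⃗_proj)^D` for a diagram category. -/
def functorArrowProjTrivFib (D : Type w) [Category.{w'} D] (σ : ModelStructure M) :
    MorphismProperty (D ⥤ Arrow M) :=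
  fun _ _ p => ∀ d, σ.trivFib (p.app d).left ∧ σ.trivFib (p.app d).right

end AlgebraStructures

section MainHelpers

variable {M : Type u} [Category.{v} M] [MonoidalCategory M]
  [HasLimits M] [HasColimits M] [HasZeroMorphisms M] [HasKernels M] [HasCokernels M]
  {C : Type w}

/-- The statement that an adjunction between Smith `O`-ideals and `O`-algebra maps
which is given entrywise by the cokernel (left adjoint) and the kernel (right
adjoint) is a Quillen adjunction with respect to the transferred model structures. -/
def CokerKerIsQuillenAdjunction (σ : ModelStructure M) (h : TensorPreservesInitial M)
    (O : OperadIn (monTD M) C) : Prop :=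
  ∀ (Fc : AlgebraIn (ppArrTD M) (arrowPPOperad h O) ⥤
      AlgebraIn (arrTD M) (arrowTensorOperad O))
    (Gk : AlgebraIn (arrTD M) (arrowTensorOperad O) ⥤
      AlgebraIn (ppArrTD M) (arrowPPOperad h O))
    (adj : Fc ⊣ Gk),
    Fc ⋙ forgetAlg (arrTD M) (arrowTensorOperad O) =
      forgetAlg (ppArrTD M) (arrowPPOperad h O) ⋙ Functor.pi (fun _ : C => cokerF M) →
    Gk ⋙ forgetAlg (ppArrTD M) (arrowPPOperad h O) =
      forgetAlg (arrTD M) (arrowTensorOperad O) ⋙ Functor.pi (fun _ : C => kerF M) →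
    ∀ (σS : ModelStructure (AlgebraIn (ppArrTD M) (arrowPPOperad h O))),
      IsEntrywiseArrowStructure σ (arrowPPOperad h O) σS →
    ∀ (σinj : ModelStructure (Arrow M)), IsInjectiveStructure σ σinj →
    ∀ (σT : ModelStructure (AlgebraIn (arrTD M) (arrowTensorOperad O))),
      IsEntrywiseInjStructure σinj (arrowTensorOperad O) σT →
    IsQuillenAdjunction σS σT adj

/-- The statement that the entrywise cokernel–kernel adjunction between Smith
`O`-ideals and `O`-algebra maps is a Quillen equivalence with respect to the
transferred model structures. -/
def CokerKerIsQuillenEquivalence (σ : ModelStructure M) (h : TensorPreservesInitial M)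
    (O : OperadIn (monTD M) C) : Prop :=
  ∀ (Fc : AlgebraIn (ppArrTD M) (arrowPPOperad h O) ⥤
      AlgebraIn (arrTD M) (arrowTensorOperad O))
    (Gk : AlgebraIn (arrTD M) (arrowTensorOperad O) ⥤
      AlgebraIn (ppArrTD M) (arrowPPOperad h O))
    (adj : Fc ⊣ Gk),
    Fc ⋙ forgetAlg (arrTD M) (arrowTensorOperad O) =
      forgetAlg (ppArrTD M) (arrowPPOperad h O) ⋙ Functor.pi (fun _ : C => cokerF M) →
    Gk ⋙ forgetAlg (ppArrTD M) (arrowPPOperad h O) =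
      forgetAlg (arrTD M) (arrowTensorOperad O) ⋙ Functor.pi (fun _ : C => kerF M) →
    ∀ (σS : ModelStructure (AlgebraIn (ppArrTD M) (arrowPPOperad h O))),
      IsEntrywiseArrowStructure σ (arrowPPOperad h O) σS →
    ∀ (σinj : ModelStructure (Arrow M)), IsInjectiveStructure σ σinj →
    ∀ (σT : ModelStructure (AlgebraIn (arrTD M) (arrowTensorOperad O))),
      IsEntrywiseInjStructure σinj (arrowTensorOperad O) σT →
    IsQuillenEquivalence σS σT adj

end MainHelpers

/-!
Each proposed generator `O⃗□ ∘ (L_ε f)_c` is the image of `f` under the composite left adjoint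
`Free ∘ (−)_c ∘ L_ε`, whose right adjoint sends a Smith ideal to the domain (`ε = 0`) or the
codomain (`ε = 1`) of its `c`-entry. Lifting properties transfer across adjunctions, and these
right adjoints jointly detect the weak equivalences and fibrations of Smith ideals, so the
(trivial) fibrations are exactly the maps with the right lifting property against the proposed
generating (trivial) cofibrations. The retract argument then shows that the generators are
themselves (trivial) cofibrations.
-/

section Transfer

universe u' v' w'

namespace ModelStructure

variable {D : Type u'} [Category.{v'} D] (σ : ModelStructure D)

theorem cof_of_forall_trivFib_hasLiftingProperty {A B : D} (g : A ⟶ B)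
    (H : ∀ {X Y : D} (p : X ⟶ Y), σ.trivFib p → HasLiftingProperty g p) : σ.cof g := by
  obtain ⟨Z, q, r, hq, hr, hrw, hfac⟩ := σ.fact_cof_trivFib g
  have := H r ⟨hr, hrw⟩
  let R := RetractArrow.ofLeftLiftingProperty hfac
  exact σ.cof_retract _ _ R.i R.r R.retract hq

theorem trivCof_of_forall_fib_hasLiftingProperty {A B : D} (g : A ⟶ B)
    (H : ∀ {X Y : D} (p : X ⟶ Y), σ.fib p → HasLiftingProperty g p) : σ.trivCof g := by
  obtain ⟨Z, q, r, hq, hqw, hr, hfac⟩ := σ.fact_trivCof_fib g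
  have := H r hr
  let R := RetractArrow.ofLeftLiftingProperty hfac
  exact ⟨σ.cof_retract _ _ R.i R.r R.retract hq, σ.weq_retract _ _ R.i R.r R.retract hqw⟩

end ModelStructure

variable {D : Type u'} [Category.{v'} D] {K : Type w'}

def imageArrows (F : K → M ⥤ D) (S : Set (Arrow M)) : Set (Arrow D) :=
  {a | ∃ k, ∃ s ∈ S, a = Arrow.mk ((F k).map s.hom)}

theorem forall_imageArrows_hasLiftingProperty_iff {F : K → M ⥤ D} {G : K → D ⥤ M}
    (adj : ∀ k, F k ⊣ G k) (S : Set (Arrow M)) {X Y : D} (p : X ⟶ Y) :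
    (∀ a ∈ imageArrows F S, HasLiftingProperty a.hom p) ↔
      ∀ k, ∀ s ∈ S, HasLiftingProperty s.hom ((G k).map p) := by
  simp only [imageArrows]
  constructor
  · intro H k s hs
    exact ((adj k).hasLiftingProperty_iff _ _).1 (H _ ⟨k, s, hs, rfl⟩)
  · rintro H _ ⟨k, s, hs, rfl⟩
    exact ((adj k).hasLiftingProperty_iff _ _).2 (H k s hs)

def CofibGenData.transfer {σ : ModelStructure M} (d : CofibGenData σ) (σD : ModelStructure D)
    {F : K → M ⥤ D} {G : K → D ⥤ M} (adj : ∀ k, F k ⊣ G k)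
    (hweq : ∀ {X Y : D} (p : X ⟶ Y), σD.weq p ↔ ∀ k, σ.weq ((G k).map p))
    (hfib : ∀ {X Y : D} (p : X ⟶ Y), σD.fib p ↔ ∀ k, σ.fib ((G k).map p)) :
    CofibGenData σD where
  I := imageArrows F d.I
  J := imageArrows F d.J
  I_cof := by
    rintro _ ⟨k, i, hi, rfl⟩
    refine σD.cof_of_forall_trivFib_hasLiftingProperty _ fun p hp => ?_
    refine ((adj k).hasLiftingProperty_iff _ _).2 ((d.trivFib_iff _).1 ?_ i hi)
    exact ⟨(hfib p).1 hp.1 k, (hweq p).1 hp.2 k⟩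
  J_trivCof := by
    rintro _ ⟨k, j, hj, rfl⟩
    refine σD.trivCof_of_forall_fib_hasLiftingProperty _ fun p hp => ?_
    exact ((adj k).hasLiftingProperty_iff _ _).2 ((d.fib_iff _).1 ((hfib p).1 hp k) j hj)
  fib_iff p := by
    simp only [hfib p, d.fib_iff, forall_imageArrows_hasLiftingProperty_iff adj]
  trivFib_iff p := by
    simp only [ModelStructure.trivFib, hfib p, hweq p, ← forall_and, ← d.trivFib_iff,
      forall_imageArrows_hasLiftingProperty_iff adj]

end Transfer

variable (M) in
def idArrowAdj : idArrowF M ⊣ Arrow.leftFunc :=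
  Adjunction.mkOfHomEquiv
    { homEquiv X A :=
        { toFun α := α.left
          invFun u := Arrow.homMk u (u ≫ A.hom) (id_comp _).symm
          left_inv α := by
            ext
            · rfl
            · exact (Arrow.w α).trans (id_comp _)
          right_inv _ := rfl }
      homEquiv_naturality_left_symm _ _ := by
        ext
        · rfl
        · exact assoc _ _ _ }

variable (M) in
noncomputable def botArrowAdj [HasInitial M] : botArrowF M ⊣ Arrow.rightFunc :=
  Adjunction.mkOfHomEquiv
    { homEquiv X A :=
        { toFun α := α.right
          invFun u := Arrow.homMk (initial.to A.left) u (initial.hom_ext _ _)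
          left_inv α := by
            ext
            · exact initial.hom_ext _ _
            · rfl
          right_inv _ := rfl }
      homEquiv_naturality_left_symm _ _ := by
        ext
        · exact initial.hom_ext _ _
        · rfl }

section Concentrated

variable [HasInitial N] {C : Type w} [DecidableEq C]

theorem conc_self (c : C) (x : N) : conc c x c = x := if_pos rfl

noncomputable def isInitialConc {c c' : C} (h : c' ≠ c) (x : N) : IsInitial (conc c x c') :=
  IsInitial.ofIso initialIsInitial (eqToIso (if_neg h).symm)

theorem concMap_self (c : C) {x y : N} (φ : x ⟶ y) :
    concMap c φ c = eqToHom (conc_self c x) ≫ φ ≫ eqToHom (conc_self c y).symm :=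
  dif_pos rfl

variable (N) in
noncomputable def concFunctor (c : C) : N ⥤ (C → N) where
  obj := conc c
  map := concMap c
  map_id x := by
    funext c'
    by_cases h : c' = c
    · subst h; simp [concMap_self]
    · exact (isInitialConc h x).hom_ext _ _
  map_comp φ ψ := by
    funext c'
    by_cases h : c' = c
    · subst h; simp [concMap_self]
    · exact (isInitialConc h _).hom_ext _ _

noncomputable def concDesc (c : C) {x : N} {X : C → N} (u : x ⟶ X c) : conc c x ⟶ X :=
  fun c' =>
    if h : c' = c then eqToHom (by rw [h]; exact conc_self c x) ≫ u ≫ eqToHom (by rw [h])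
    else (isInitialConc h x).to _

theorem concDesc_self (c : C) {x : N} {X : C → N} (u : x ⟶ X c) :
    concDesc c u c = eqToHom (conc_self c x) ≫ u := by
  simp [concDesc]

noncomputable def concHomEquiv (c : C) (x : N) (X : C → N) : (conc c x ⟶ X) ≃ (x ⟶ X c) where
  toFun f := eqToHom (conc_self c x).symm ≫ f c
  invFun := concDesc c
  left_inv f := by
    funext c'
    by_cases h : c' = c
    · subst h; simp [concDesc_self]
    · exact (isInitialConc h x).hom_ext _ _
  right_inv u := by simp [concDesc_self]

theorem concHomEquiv_symm_comp (c : C) {x' x : N} {X : C → N} (φ : x' ⟶ x) (u : x ⟶ X c) :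
    (concHomEquiv c x' X).symm (φ ≫ u) = concMap c φ ≫ (concHomEquiv c x X).symm u := by
  rw [Equiv.symm_apply_eq]
  simp [concHomEquiv, concMap_self, concDesc_self]

noncomputable def concAdj (c : C) : concFunctor N c ⊣ Pi.eval (fun _ : C => N) c :=
  Adjunction.mkOfHomEquiv
    { homEquiv := concHomEquiv c
      homEquiv_naturality_left_symm := concHomEquiv_symm_comp c
      homEquiv_naturality_right _ _ := (assoc _ _ _).symm }

end Concentrated

theorem statement6_general {M : Type u} [Category.{v} M] [MonoidalCategory M]
    [HasColimits M]
    (σ : ModelStructure M)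
    (d : CofibGenData σ)
    (h : TensorPreservesInitial M) {C : Type w} [DecidableEq C]
    (O : OperadIn (monTD M) C)
    (Free : (C → Arrow M) ⥤ AlgebraIn (ppArrTD M) (arrowPPOperad h O))
    (adjF : Free ⊣ forgetAlg (ppArrTD M) (arrowPPOperad h O))
    (σS : ModelStructure (AlgebraIn (ppArrTD M) (arrowPPOperad h O)))
    (hσS : IsEntrywiseArrowStructure σ (arrowPPOperad h O) σS) :
    ∃ dS : CofibGenData σS,
      dS.I = {a : Arrow (AlgebraIn (ppArrTD M) (arrowPPOperad h O)) | ∃ c : C,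
        (∃ i ∈ d.I, a = Arrow.mk (Free.map (concMap c ((idArrowF M).map i.hom)))) ∨
        (∃ i ∈ d.I, a = Arrow.mk (Free.map (concMap c ((botArrowF M).map i.hom))))} ∧
      dS.J = {a : Arrow (AlgebraIn (ppArrTD M) (arrowPPOperad h O)) | ∃ c : C,
        (∃ j ∈ d.J, a = Arrow.mk (Free.map (concMap c ((idArrowF M).map j.hom)))) ∨
        (∃ j ∈ d.J, a = Arrow.mk (Free.map (concMap c ((botArrowF M).map j.hom))))} := by
  let F : C ⊕ C → M ⥤ AlgebraIn (ppArrTD M) (arrowPPOperad h O) :=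
    Sum.elim (fun c => idArrowF M ⋙ concFunctor (Arrow M) c ⋙ Free)
      (fun c => botArrowF M ⋙ concFunctor (Arrow M) c ⋙ Free)
  let G : C ⊕ C → AlgebraIn (ppArrTD M) (arrowPPOperad h O) ⥤ M :=
    Sum.elim (fun c => (forgetAlg _ _ ⋙ Pi.eval _ c) ⋙ Arrow.leftFunc)
      (fun c => (forgetAlg _ _ ⋙ Pi.eval _ c) ⋙ Arrow.rightFunc)
  let adj : ∀ k, F k ⊣ G k
    | .inl c => (idArrowAdj M).comp ((concAdj c).comp adjF)
    | .inr c => (botArrowAdj M).comp ((concAdj c).comp adjF)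
  have hweq {A B} (p : A ⟶ B) : σS.weq p ↔ ∀ k, σ.weq ((G k).map p) :=
    (hσS.1 _ _ p).trans <| forall_and.trans (Sum.forall (p := fun k => σ.weq ((G k).map p))).symm
  have hfib {A B} (p : A ⟶ B) : σS.fib p ↔ ∀ k, σ.fib ((G k).map p) :=
    (hσS.2 _ _ p).trans <| forall_and.trans (Sum.forall (p := fun k => σ.fib ((G k).map p))).symm
  refine ⟨d.transfer σS adj hweq hfib, ?_, ?_⟩ <;>
    exact Set.ext fun _ => Sum.exists.trans exists_or.symm

/-- Prop. 4.8 of White–Yau: under the standing hypotheses, the model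
structure on Smith `O`-ideals is cofibrantly generated, with generating (trivial)
cofibrations obtained by applying the free `O⃗□`-algebra functor to the generating
(trivial) cofibrations `L₀I ∪ L₁I` (resp. `L₀J ∪ L₁J`) concentrated in a single
color. -/
theorem statement6 {M : Type u} [Category.{v} M] [MonoidalCategory M]
    [SymmetricCategory M] [HasLimits M] [HasColimits M]
    (σ : ModelStructure M) (hpp : SatisfiesPPAxiom (monTD M) σ)
    (hspade : SpadeCondition (monTD M) σ)
    (d : CofibGenData σ) (hdom : d.SmallDomains) (hcod : d.SmallCodomains)
    (h : TensorPreservesInitial M) {C : Type w} [DecidableEq C]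
    (O : OperadIn (monTD M) C)
    (Free : (C → Arrow M) ⥤ AlgebraIn (ppArrTD M) (arrowPPOperad h O))
    (adjF : Free ⊣ forgetAlg (ppArrTD M) (arrowPPOperad h O))
    (σS : ModelStructure (AlgebraIn (ppArrTD M) (arrowPPOperad h O)))
    (hσS : IsEntrywiseArrowStructure σ (arrowPPOperad h O) σS) :
    ∃ dS : CofibGenData σS,
      dS.I = {a : Arrow (AlgebraIn (ppArrTD M) (arrowPPOperad h O)) | ∃ c : C,
        (∃ i ∈ d.I, a = Arrow.mk (Free.map (concMap c ((idArrowF M).map i.hom)))) ∨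
        (∃ i ∈ d.I, a = Arrow.mk (Free.map (concMap c ((botArrowF M).map i.hom))))} ∧
      dS.J = {a : Arrow (AlgebraIn (ppArrTD M) (arrowPPOperad h O)) | ∃ c : C,
        (∃ j ∈ d.J, a = Arrow.mk (Free.map (concMap c ((idArrowF M).map j.hom)))) ∨
        (∃ j ∈ d.J, a = Arrow.mk (Free.map (concMap c ((botArrowF M).map j.hom))))} :=
  statement6_general σ d h O Free adjF σS hσS

end SmithIdeals
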